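/- In the bounded forecasting game, let E be the event that x_n = p_n for infinitely many n. Then Q̲(E) = 0: for every K_0 < 1 there is a strategy of Reality that always announces x_n ≠ p_n and guarantees sup_n K_n < 1 against every Forecaster and every Skeptic keeping the capital nonnegative. -/

import Mathlib

open Filter Finset

/-- Capital process in the bounded forecasting game with initial capital `a`. -/
def cap (a : ℝ) (p M x : ℕ → ℝ) : ℕ → ℝ
  | 0 => a
  | n + 1 => cap a p M x n + M n * (x n - p n)

/-- Forecaster's moves are in `[0,1]`. -/
def ValidP (p : ℕ → ℝ) : Prop := ∀ n, p n ∈ Set.Icc (0 : ℝ) 1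

/-- In the bounded forecasting game Reality's moves are in `[0,1]`. -/
def ValidXb (x : ℕ → ℝ) : Prop := ∀ n, x n ∈ Set.Icc (0 : ℝ) 1

/-- A Reality strategy reads Forecaster's and Skeptic's moves up to round `n`. -/
def RAdapted (R : (ℕ → ℝ) → (ℕ → ℝ) → ℕ → ℝ) : Prop :=
  ∀ p p' M M' : ℕ → ℝ, ∀ n, (∀ k ≤ n, p k = p' k) → (∀ k ≤ n, M k = M' k) →
    R p M n = R p' M' n

/-- The set of initial capitals `a` for which some Reality strategy guarantees
the event and keeps the capital at most 1, against every Forecaster and every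
Skeptic keeping the capital nonnegative. -/
def QSetb (E : (ℕ → ℝ) → (ℕ → ℝ) → Prop) : Set ℝ :=
  {a | ∃ R, RAdapted R ∧ ∀ p M : ℕ → ℝ, ValidP p →
    ValidXb (R p M) ∧
    ((∀ n, 0 ≤ cap a p M (R p M) n) →
      (E p (R p M) ∧ ∀ n, cap a p M (R p M) n ≤ 1))}

noncomputable def UpperQb (E : (ℕ → ℝ) → (ℕ → ℝ) → Prop) : ℝ := sSup (QSetb E)

noncomputable def LowerQb (E : (ℕ → ℝ) → (ℕ → ℝ) → Prop) : ℝ :=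
  1 - UpperQb (fun p x => ¬ E p x)


/-! Reality answers `x n = p n ± δ n` (moving towards the middle of `[0, 1]`), with
`δ n ≤ ε n / (|M n| + 1)`. Skeptic's gain in round `n` is then at most `ε n`, so for
`ε n = (1 - a) / 4 · 2⁻ⁿ` his capital stays below `a + (1 - a) / 2 < 1`, while `x n ≠ p n`
in every round. Conversely no initial capital above `1` is admissible, since Skeptic may
simply never bet; hence the upper value of the complement of the event is `1`. -/

noncomputable def realityGap (ε M : ℕ → ℝ) (n : ℕ) : ℝ :=
  min (ε n / (|M n| + 1)) (1 / 2)

noncomputable def avoidingReality (ε : ℕ → ℝ) (p M : ℕ → ℝ) (n : ℕ) : ℝ :=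
  if p n ≤ 1 / 2 then p n + realityGap ε M n else p n - realityGap ε M n

section realityGap

variable {ε : ℕ → ℝ} {n : ℕ}

lemma realityGap_nonneg (hε : 0 ≤ ε n) (M : ℕ → ℝ) : 0 ≤ realityGap ε M n :=
  le_min (by positivity) (by norm_num)

lemma realityGap_pos (hε : 0 < ε n) (M : ℕ → ℝ) : 0 < realityGap ε M n :=
  lt_min (by positivity) (by norm_num)

lemma realityGap_le_half (M : ℕ → ℝ) : realityGap ε M n ≤ 1 / 2 :=
  min_le_right _ _

lemma abs_mul_realityGap_le (hε : 0 ≤ ε n) (M : ℕ → ℝ) :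
    |M n| * realityGap ε M n ≤ ε n := by
  have hM : 0 < |M n| + 1 := by positivity
  calc |M n| * realityGap ε M n ≤ |M n| * (ε n / (|M n| + 1)) := by
        gcongr; exact min_le_left _ _
    _ = ε n * (|M n| / (|M n| + 1)) := by ring
    _ ≤ ε n * 1 := by
        gcongr; rw [div_le_one hM]; linarith
    _ = ε n := mul_one _

end realityGap

section avoidingReality

variable {ε : ℕ → ℝ} {n : ℕ}

lemma avoidingReality_adapted (ε : ℕ → ℝ) : RAdapted (avoidingReality ε) := by
  intro p p' M M' n hp hM
  simp only [avoidingReality, realityGap, hp n le_rfl, hM n le_rfl]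

lemma avoidingReality_mem_Icc (hε : 0 ≤ ε n) {p : ℕ → ℝ} (hp : p n ∈ Set.Icc 0 1)
    (M : ℕ → ℝ) : avoidingReality ε p M n ∈ Set.Icc 0 1 := by
  obtain ⟨hp0, hp1⟩ := hp
  have h0 := realityGap_nonneg hε M
  have h1 := realityGap_le_half (ε := ε) (n := n) M
  unfold avoidingReality
  split_ifs <;> constructor <;> linarith

lemma abs_avoidingReality_sub (hε : 0 ≤ ε n) (p M : ℕ → ℝ) :
    |avoidingReality ε p M n - p n| = realityGap ε M n := by
  have h0 := realityGap_nonneg hε M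
  unfold avoidingReality
  split_ifs
  · rw [add_sub_cancel_left, abs_of_nonneg h0]
  · rw [sub_sub_cancel_left, abs_neg, abs_of_nonneg h0]

lemma avoidingReality_ne (hε : 0 < ε n) (p M : ℕ → ℝ) : avoidingReality ε p M n ≠ p n := by
  rw [← sub_ne_zero, ← abs_pos, abs_avoidingReality_sub hε.le]
  exact realityGap_pos hε M

end avoidingReality

lemma cap_le_add_sum {a : ℝ} {p M x ε : ℕ → ℝ} (h : ∀ k, M k * (x k - p k) ≤ ε k) (n : ℕ) :
    cap a p M x n ≤ a + ∑ k ∈ range n, ε k := by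
  induction n with
  | zero => simp [cap]
  | succ n ih =>
    rw [sum_range_succ]
    linarith [h n, show cap a p M x (n + 1) = cap a p M x n + M n * (x n - p n) from rfl]

lemma cap_avoidingReality_le {a : ℝ} {ε : ℕ → ℝ} (hε : ∀ k, 0 ≤ ε k) (p M : ℕ → ℝ) (n : ℕ) :
    cap a p M (avoidingReality ε p M) n ≤ a + ∑ k ∈ range n, ε k := by
  refine cap_le_add_sum (fun k => ?_) n
  calc M k * (avoidingReality ε p M k - p k)
      ≤ |M k| * |avoidingReality ε p M k - p k| := by rw [← abs_mul]; exact le_abs_self _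
    _ = |M k| * realityGap ε M k := by rw [abs_avoidingReality_sub (hε k)]
    _ ≤ ε k := abs_mul_realityGap_le (hε k) M

lemma exists_avoiding_strategy {a : ℝ} (ha : a < 1) :
    ∃ R, RAdapted R ∧ ∀ p M : ℕ → ℝ, ValidP p →
      (ValidXb (R p M) ∧ ∀ n, R p M n ≠ p n) ∧ ∀ n, cap a p M (R p M) n ≤ (1 + a) / 2 := by
  set ε : ℕ → ℝ := fun k => (1 - a) / 4 * (1 / 2) ^ k
  have ha' : 0 < 1 - a := by linarith
  have hε : ∀ k, 0 < ε k := fun k => by positivity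
  refine ⟨avoidingReality ε, avoidingReality_adapted ε, fun p M hp =>
    ⟨⟨fun n => avoidingReality_mem_Icc (hε n).le (hp n) M,
      fun n => avoidingReality_ne (hε n) p M⟩, fun n => ?_⟩⟩
  have hsum : ∑ k ∈ range n, ε k ≤ (1 - a) / 4 * 2 := by
    rw [← mul_sum]
    exact mul_le_mul_of_nonneg_left (sum_geometric_two_le n) (by linarith)
  linarith [cap_avoidingReality_le (a := a) (fun k => (hε k).le) p M n]

lemma cap_zero_stake (a : ℝ) (p x : ℕ → ℝ) (n : ℕ) : cap a p (fun _ => 0) x n = a := by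
  induction n with
  | zero => rfl
  | succ n ih => simp [cap, ih]

lemma le_one_of_mem_QSetb {E : (ℕ → ℝ) → (ℕ → ℝ) → Prop} {a : ℝ} (ha : a ∈ QSetb E) :
    a ≤ 1 := by
  by_contra! h
  obtain ⟨R, -, hR⟩ := ha
  have hp : ValidP fun _ => 0 := fun _ => ⟨le_rfl, zero_le_one⟩
  have hbound := ((hR _ _ hp).2 fun n => by rw [cap_zero_stake]; linarith).2 0
  rw [cap_zero_stake] at hbound
  linarith

lemma UpperQb_eq_one {E : (ℕ → ℝ) → (ℕ → ℝ) → Prop} (h : ∀ a < 1, a ∈ QSetb E) :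
    UpperQb E = 1 := by
  have hbdd : BddAbove (QSetb E) := ⟨1, fun _ => le_one_of_mem_QSetb⟩
  refine le_antisymm (csSup_le ⟨0, h 0 one_pos⟩ fun _ => le_one_of_mem_QSetb) ?_
  refine le_of_forall_lt fun c hc => ?_
  calc c < (c + 1) / 2 := by linarith
    _ ≤ UpperQb E := le_csSup hbdd (h _ (by linarith))

/-- In the bounded forecasting game, the event `E` that `x n = p n` for
infinitely many `n` has `Q̲(E) = 0`: moreover, for every initial capital
`a < 1` there is a Reality strategy always announcing `x n ≠ p n` that keeps
the supremum of the capital strictly below 1 against every Forecaster and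
every Skeptic keeping the capital nonnegative. -/
theorem stmt_16 :
    LowerQb (fun p x => {n | x n = p n}.Infinite) = 0 ∧
    ∀ a : ℝ, a < 1 →
      ∃ R, RAdapted R ∧ ∀ p M : ℕ → ℝ, ValidP p →
        (ValidXb (R p M) ∧ ∀ n, R p M n ≠ p n) ∧
        ((∀ n, 0 ≤ cap a p M (R p M) n) →
          ∃ q : ℝ, q < 1 ∧ ∀ n, cap a p M (R p M) n ≤ q) := by
  refine ⟨?_, fun a ha => ?_⟩
  · suffices UpperQb (fun p x => ¬ {n | x n = p n}.Infinite) = 1 by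
      rw [LowerQb, this, sub_self]
    refine UpperQb_eq_one fun a ha => ?_
    obtain ⟨R, hRad, hR⟩ := exists_avoiding_strategy ha
    refine ⟨R, hRad, fun p M hp => ⟨(hR p M hp).1.1, fun _ => ⟨?_, fun n => ?_⟩⟩⟩
    · have : {n | R p M n = p n} = ∅ := Set.eq_empty_of_forall_notMem (hR p M hp).1.2
      simp [this]
    · linarith [(hR p M hp).2 n]
  · obtain ⟨R, hRad, hR⟩ := exists_avoiding_strategy ha
    exact ⟨R, hRad, fun p M hp =>
      ⟨(hR p M hp).1, fun _ => ⟨(1 + a) / 2, by linarith, (hR p M hp).2⟩⟩⟩
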